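/- arXiv:1812.03746 — 3 statements merged into one kernel-verified Lean document; each statement's English description precedes it below -/
import Mathlib

section
/- Let S be a set and F, G : S → S commuting bijections. Suppose the quotient S/F by the Z-action n·s = F^n(s) is finite with representatives s_1,…,s_r, and for each i there exist a positive integer p_i and an index σ(i) with G(s_i) = F^{p_i}(s_{σ(i)}). Then the quotient S/G is also finite. -/
/-!
Since `F` and `G` commute, `G ^ n (s i) = F ^ (p i + p (σ i) + ⋯) (s (σ^[n] i))`. As `σ` acts on a
finite set, some `j = σ^[a] i` is periodic, `σ^[b] j = j`, whence `G ^ b (s j) = F ^ P (s j)` with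
`P > 0`. Then `F ^ (q * P + k) (s j) = G ^ (q * b) (F ^ k (s j))`, so the `F`-orbit of `s j`, and
with it (through `G ^ a`) that of `s i`, lies in the `G`-orbits of the `F ^ k (s j)`, `0 ≤ k < P`.
-/

open Finset Function

theorem Function.exists_iterate_isPeriodicPt {α : Type*} [Finite α] (f : α → α) (x : α) :
    ∃ a b, 0 < b ∧ IsPeriodicPt f b (f^[a] x) := by
  obtain ⟨m, n, hne, heq⟩ := Finite.exists_ne_map_eq_of_infinite (f^[·] x)
  rcases lt_or_gt_of_ne hne with hlt | hlt
  · refine ⟨m, n - m, by omega, ?_⟩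
    simp only [IsPeriodicPt, IsFixedPt, ← iterate_add_apply, Nat.sub_add_cancel hlt.le]
    exact heq.symm
  · refine ⟨n, m - n, by omega, ?_⟩
    simp only [IsPeriodicPt, IsFixedPt, ← iterate_add_apply, Nat.sub_add_cancel hlt.le]
    exact heq

namespace Equiv.Perm

variable {S : Type*} {F G : Perm S}

theorem zpow_apply_zpow_apply_comm (hFG : Commute F G) (a b : ℤ) (x : S) :
    (G ^ b) ((F ^ a) x) = (F ^ a) ((G ^ b) x) :=
  DFunLike.congr_fun (hFG.zpow_zpow a b).eq.symm x

theorem zpow_apply_eq_zpow_apply_of_apply_eq (hFG : Commute F G) {y : S} (hy : F y = G y)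
    (q : ℤ) : (F ^ q) y = (G ^ q) y := by
  have hfix : IsFixedPt ⇑(F⁻¹ * G) y := by simp [IsFixedPt, ← hy]
  have := hfix.perm_zpow q
  rw [hFG.inv_left.mul_zpow, inv_zpow, IsFixedPt, mul_apply, inv_eq_iff_eq] at this
  exact this.symm

theorem pow_apply_eq_zpow_apply_iterate {ι : Type*} (hFG : Commute F G) {s : ι → S}
    {σ : ι → ι} {p : ι → ℤ} (hG : ∀ i, G (s i) = (F ^ p i) (s (σ i))) (n : ℕ) (i : ι) :
    (G ^ n) (s i) = (F ^ ∑ k ∈ range n, p (σ^[k] i)) (s (σ^[n] i)) := by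
  induction n generalizing i with
  | zero => simp
  | succ n ih =>
    rw [pow_succ, mul_apply, hG, ← zpow_natCast, zpow_apply_zpow_apply_comm hFG, zpow_natCast,
      ih, ← mul_apply, ← zpow_add, sum_range_succ', iterate_zero_apply, add_comm]
    simp only [iterate_succ_apply]

theorem exists_fin_zpow_apply_eq (hFG : Commute F G) {y : S} {b : ℤ} {P : ℕ} (hP : 0 < P)
    (hy : (G ^ b) y = (F ^ (P : ℤ)) y) (n : ℤ) :
    ∃ k : Fin P, ∃ m : ℤ, (G ^ m) ((F ^ (k : ℤ)) y) = (F ^ n) y := by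
  have hP' : (0 : ℤ) < P := by exact_mod_cast hP
  lift n % P to ℕ using Int.emod_nonneg n hP'.ne' with k hk
  have hkP : k < P := by have := Int.emod_lt_of_pos n hP'; omega
  refine ⟨⟨k, hkP⟩, b * (n / P), ?_⟩
  have hpow := zpow_apply_eq_zpow_apply_of_apply_eq (hFG.zpow_zpow P b).symm hy (n / P)
  rw [zpow_apply_zpow_apply_comm hFG, zpow_mul, hpow, ← zpow_mul, ← mul_apply, ← zpow_add,
    Fin.val_mk, hk, Int.emod_add_mul_ediv]

theorem exists_fin_zpow_apply_eq_of_zpow_apply_eq (hFG : Commute F G) {x y : S} {a Q : ℤ}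
    (hxy : (G ^ a) x = (F ^ Q) y) {b : ℤ} {P : ℕ} (hP : 0 < P)
    (hy : (G ^ b) y = (F ^ (P : ℤ)) y) (n : ℤ) :
    ∃ k : Fin P, ∃ m : ℤ, (G ^ m) ((F ^ (k : ℤ)) y) = (F ^ n) x := by
  obtain ⟨k, m, hm⟩ := exists_fin_zpow_apply_eq hFG hP hy (n + Q)
  refine ⟨k, -a + m, ?_⟩
  rw [zpow_add, mul_apply, hm, zpow_neg, inv_eq_iff_eq, zpow_apply_zpow_apply_comm hFG, hxy,
    ← mul_apply, ← zpow_add]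

end Equiv.Perm

open Equiv.Perm in
theorem finite_orbits_of_G_general (S : Type*) (F G : Equiv.Perm S)
    (hcomm : F * G = G * F)
    (r : ℕ) (s : Fin r → S)
    (hcover : ∀ x : S, ∃ i : Fin r, ∃ n : ℤ, (F ^ n) (s i) = x)
    (p : Fin r → ℕ) (hp : ∀ i, 0 < p i)
    (σ : Fin r → Fin r)
    (hG : ∀ i, G (s i) = (F ^ (p i : ℤ)) (s (σ i))) :
    ∃ (m : ℕ) (t : Fin m → S), ∀ x : S, ∃ j : Fin m, ∃ n : ℤ, (G ^ n) (t j) = x := by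
  have hFG : Commute F G := hcomm
  have hiter := pow_apply_eq_zpow_apply_iterate hFG hG
  choose a b hb hper using exists_iterate_isPeriodicPt σ
  set j := fun i ↦ σ^[a i] i
  set P := fun i ↦ ∑ k ∈ range (b i), p (σ^[k] (j i))
  have hP : ∀ i, 0 < P i := fun i ↦ sum_pos (fun _ _ ↦ hp _) (nonempty_range_iff.mpr (hb i).ne')
  have hperiod : ∀ i, (G ^ (b i : ℤ)) (s (j i)) = (F ^ (P i : ℤ)) (s (j i)) := fun i ↦ by
    rw [zpow_natCast, hiter, hper i, Nat.cast_sum]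
  have htail : ∀ i, (G ^ (a i : ℤ)) (s i) = (F ^ ∑ k ∈ range (a i), (p (σ^[k] i) : ℤ)) (s (j i)) :=
    fun i ↦ by rw [zpow_natCast, hiter]
  let t : (Σ i, Fin (P i)) → S := fun ik ↦ (F ^ (ik.2 : ℤ)) (s (j ik.1))
  have ht : ∀ x, ∃ ik, ∃ m : ℤ, (G ^ m) (t ik) = x := by
    intro x
    obtain ⟨i, n, rfl⟩ := hcover x
    obtain ⟨k, m, hm⟩ :=
      exists_fin_zpow_apply_eq_of_zpow_apply_eq hFG (htail i) (hP i) (hperiod i) n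
    exact ⟨⟨i, k⟩, m, hm⟩
  obtain ⟨m, ⟨e⟩⟩ := Finite.exists_equiv_fin (Σ i, Fin (P i))
  refine ⟨m, t ∘ e.symm, fun x ↦ ?_⟩
  obtain ⟨ik, n, h⟩ := ht x
  exact ⟨e ik, n, by simpa using h⟩

theorem finite_orbits_of_G (S : Type*) (F G : Equiv.Perm S)
    (hcomm : F * G = G * F)
    (r : ℕ) (s : Fin r → S)
    (hcover : ∀ x : S, ∃ i : Fin r, ∃ n : ℤ, (F ^ n) (s i) = x)
    (hdist : ∀ i j : Fin r, (∃ n : ℤ, (F ^ n) (s i) = s j) → i = j)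
    (p : Fin r → ℕ) (hp : ∀ i, 0 < p i)
    (σ : Fin r → Fin r)
    (hG : ∀ i, G (s i) = (F ^ (p i : ℤ)) (s (σ i))) :
    ∃ (m : ℕ) (t : Fin m → S), ∀ x : S, ∃ j : Fin m, ∃ n : ℤ, (G ^ n) (t j) = x :=
  finite_orbits_of_G_general S F G hcomm r s hcover p hp σ hG
end

section
/- Let D be a triangulated category, E ⊆ D an admissible thick subcategory, and (G, F) an adjoint pair of exact endofunctors of D (G left adjoint to F). If F restricts to an autoequivalence of E and F acts nilpotently on the right orthogonal E^⊥ (i.e. F(E^⊥) ⊆ E^⊥ and F^b(E^⊥) = 0 for some b), then G(E) ⊆ E and the restriction of G to E is a quasi-inverse of the restriction of F to E; in particular G restricts to an autoequivalence of E. -/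
/-!
If `F` preserves `E^⊥`, then for `e ∈ E` and `t ∈ E^⊥` we get `Hom(G e, t) ≅ Hom(e, F t) = 0`,
so `G e` lies in the left orthogonal of `E^⊥`. Right admissibility makes that left orthogonal
equal to `E`: the cone of the coreflection `ι R d ⟶ d` lies in `E^⊥`, so for `d` left orthogonal
to `E^⊥` the coreflection is a split epimorphism and `d` is a retract of an object of `E`.
Thus `G` restricts to `E`, where it is left adjoint to the equivalence `F|_E`, hence its
quasi-inverse.
-/

open CategoryTheory Limits CategoryTheory.Pretriangulated

namespace Stmt4

universe v u

variable {D : Type u} [Category.{v} D] [Preadditive D] [HasZeroObject D]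
  [HasShift D ℤ] [∀ n : ℤ, (CategoryTheory.shiftFunctor D n).Additive] [Pretriangulated D]

/-- Iterated composition of an endofunctor. -/
def iter (F : D ⥤ D) : ℕ → D ⥤ D
  | 0 => 𝟭 D
  | n + 1 => iter F n ⋙ F

/-- The right orthogonal of a class of objects. -/
def rOrth (P : D → Prop) : D → Prop := fun d => ∀ e : D, P e → ∀ f : e ⟶ d, f = 0

lemma rOrth_iff_rightOrthogonal {C : Type*} [Category C] [Preadditive C] (P : C → Prop) (d : C) :
    rOrth P d ↔ ObjectProperty.rightOrthogonal P d :=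
  ⟨fun h _ f hX ↦ h _ hX f, fun h _ he f ↦ h f he⟩

section Orthogonal

variable {C C' : Type*} [Category C] [Category C']

lemma comp_counit_bijective {P : ObjectProperty C} {R : C ⥤ P.FullSubcategory}
    (adj : P.ι ⊣ R) {e : C} (he : P e) (d : C) :
    Function.Bijective (fun f : e ⟶ (R.obj d).obj ↦ f ≫ adj.counit.app d) :=
  ((P.fullyFaithfulι.homEquiv (X := ⟨e, he⟩) (Y := R.obj d)).symm.trans
    (adj.homEquiv ⟨e, he⟩ d).symm).bijective

variable [HasZeroMorphisms C] [HasZeroMorphisms C']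

lemma le_leftOrthogonal_rightOrthogonal (P : ObjectProperty C) :
    P ≤ P.rightOrthogonal.leftOrthogonal :=
  fun _ hX _ f hY ↦ hY f hX

lemma leftOrthogonal_obj_of_adjunction {G : C ⥤ C'} {F : C' ⥤ C} (adj : G ⊣ F)
    {P : ObjectProperty C} {Q : ObjectProperty C'} (hF : ∀ Y, Q Y → P (F.obj Y))
    {X : C} (hX : P.leftOrthogonal X) : Q.leftOrthogonal (G.obj X) := by
  intro Y f hY
  have := adj.isLeftAdjoint
  rw [← (adj.homEquiv X Y).symm_apply_apply f, hX (adj.homEquiv X Y f) (hF Y hY),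
    Adjunction.homEquiv_counit]
  simp

end Orthogonal

section Triangulated

variable {P : ObjectProperty D}

lemma eq_zero_of_comp_shift_eq_zero [P.IsStableUnderShift ℤ] {X Y : D} {ε : X ⟶ Y}
    (hε : ∀ e, P e → Function.Injective (fun f : e ⟶ X ↦ f ≫ ε)) (n : ℤ) {e : D} (he : P e)
    (g : e ⟶ X⟦n⟧) (hg : g ≫ ε⟦n⟧' = 0) : g = 0 := by
  -- `adj.homEquiv : (e⟦-n⟧ ⟶ Z) ≃ (e ⟶ Z⟦n⟧)`, natural in `Z`
  let adj := (shiftEquiv D n).symm.toAdjunction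
  obtain ⟨u, rfl⟩ := (adj.homEquiv _ _).surjective g
  have homEquiv_zero : ∀ Z, adj.homEquiv e Z 0 = 0 := fun Z ↦ by
    simp [Adjunction.homEquiv_unit]
  have hu : u ≫ ε = 0 := by
    apply (adj.homEquiv _ _).injective
    rw [adj.homEquiv_naturality_right, homEquiv_zero]
    exact hg
  rw [hε _ (P.le_shift (-n) _ he) (hu.trans zero_comp.symm), homEquiv_zero]
  rfl

lemma rightOrthogonal_obj₃ [P.IsStableUnderShift ℤ] (T : Triangle D)
    (hT : T ∈ distTriang D) (h : ∀ e, P e → Function.Bijective (fun f : e ⟶ T.obj₁ ↦ f ≫ T.mor₁)) :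
    P.rightOrthogonal T.obj₃ := by
  intro e f he
  have hf : f ≫ T.mor₃ = 0 := eq_zero_of_comp_shift_eq_zero (fun e he ↦ (h e he).injective) 1 he _
    (by rw [Category.assoc, comp_distTriang_mor_zero₃₁ _ hT, comp_zero])
  obtain ⟨q, rfl⟩ := Triangle.coyoneda_exact₃ _ hT f hf
  obtain ⟨p, rfl⟩ := (h e he).surjective q
  simp [comp_distTriang_mor_zero₁₂ _ hT]

lemma leftOrthogonal_rightOrthogonal_le [P.IsStableUnderShift ℤ]
    [P.IsStableUnderRetracts] [P.ι.IsLeftAdjoint] : P.rightOrthogonal.leftOrthogonal ≤ P := by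
  intro d hd
  let adj := Adjunction.ofIsLeftAdjoint P.ι
  obtain ⟨t, g, h, hT⟩ := distinguished_cocone_triangle (adj.counit.app d)
  have hg : g = 0 :=
    hd g (rightOrthogonal_obj₃ _ hT fun e he ↦ comp_counit_bijective adj he d)
  obtain ⟨r, hr⟩ := Triangle.coyoneda_exact₂ _ hT (𝟙 d) (by subst hg; exact comp_zero)
  exact P.prop_of_retract ⟨r, adj.counit.app d, hr.symm⟩ (P.ι.rightAdjoint.obj d).property

end Triangulated

theorem adjoint_restricts_to_quasi_inverse_general
    (P : D → Prop)
    -- `E` is a thick subcategory: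
    (hP_shift : ∀ (X : D) (n : ℤ), P X → P (X⟦n⟧))
    (hP_retract : ∀ (X Z : D), P Z → ∀ (i : X ⟶ Z) (r : Z ⟶ X), i ≫ r = 𝟙 X → P X)
    -- `E` is admissible, i.e. the inclusion of the corresponding full subcategory
    -- has both a right adjoint and a left adjoint:
    (_hadm_right : (ObjectProperty.ι P).IsLeftAdjoint)
    -- `(G, F)` an adjoint pair of exact endofunctors:
    (F G : D ⥤ D)
    (adj : G ⊣ F)
    -- `F` restricts to an autoequivalence of `E`:
    (hFP : ∀ d : D, P d → P (F.obj d))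
    (hFE : (ObjectProperty.lift P (ObjectProperty.ι P ⋙ F)
      (fun X => hFP X.1 X.2)).IsEquivalence)
    -- `F` acts nilpotently on `E^⊥`:
    (hFperp : ∀ d : D, rOrth P d → rOrth P (F.obj d)) :
    ∃ hGP : ∀ d : D, P d → P (G.obj d),
      Nonempty ((ObjectProperty.lift P (ObjectProperty.ι P ⋙ F)
            (fun X => hFP X.1 X.2) ⋙
          ObjectProperty.lift P (ObjectProperty.ι P ⋙ G)
            (fun X => hGP X.1 X.2)) ≅ 𝟭 _) ∧
      Nonempty ((ObjectProperty.lift P (ObjectProperty.ι P ⋙ G)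
            (fun X => hGP X.1 X.2) ⋙
          ObjectProperty.lift P (ObjectProperty.ι P ⋙ F)
            (fun X => hFP X.1 X.2)) ≅ 𝟭 _) := by
  have : ObjectProperty.IsStableUnderShift P ℤ := ⟨fun n ↦ ⟨fun X hX ↦ hP_shift X n hX⟩⟩
  have : ObjectProperty.IsStableUnderRetracts P :=
    ⟨fun h hY ↦ hP_retract _ _ hY h.i h.r h.retract⟩
  have hFperp' : ∀ d, ObjectProperty.rightOrthogonal P d →
      ObjectProperty.rightOrthogonal P (F.obj d) := by
    simpa only [rOrth_iff_rightOrthogonal] using hFperp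
  have hGP (e : D) (he : P e) : P (G.obj e) :=
    leftOrthogonal_rightOrthogonal_le _ <| leftOrthogonal_obj_of_adjunction adj hFperp'
      (le_leftOrthogonal_rightOrthogonal P e he)
  let adjE := adj.restrictFullyFaithful (ObjectProperty.fullyFaithfulι P)
    (ObjectProperty.fullyFaithfulι P)
    (ObjectProperty.liftCompιIso P (ObjectProperty.ι P ⋙ G) fun X ↦ hGP X.1 X.2).symm
    (ObjectProperty.liftCompιIso P (ObjectProperty.ι P ⋙ F) fun X ↦ hFP X.1 X.2).symm
  exact ⟨hGP, ⟨asIso adjE.counit⟩, ⟨(asIso adjE.unit).symm⟩⟩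

theorem adjoint_restricts_to_quasi_inverse
    (P : D → Prop)
    -- `E` is a thick subcategory:
    (hP_iso : ∀ {X Y : D}, (X ≅ Y) → P X → P Y)
    (hP_shift : ∀ (X : D) (n : ℤ), P X → P (X⟦n⟧))
    (hP_tri : ∀ T ∈ distTriang D, P T.obj₁ → P T.obj₂ → P T.obj₃)
    (hP_retract : ∀ (X Z : D), P Z → ∀ (i : X ⟶ Z) (r : Z ⟶ X), i ≫ r = 𝟙 X → P X)
    -- `E` is admissible, i.e. the inclusion of the corresponding full subcategory
    -- has both a right adjoint and a left adjoint:
    (_hadm_right : (ObjectProperty.ι P).IsLeftAdjoint)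
    (_hadm_left : (ObjectProperty.ι P).IsRightAdjoint)
    -- `(G, F)` an adjoint pair of exact endofunctors:
    (F G : D ⥤ D) [F.CommShift ℤ] [F.IsTriangulated] [G.CommShift ℤ] [G.IsTriangulated]
    (adj : G ⊣ F)
    -- `F` restricts to an autoequivalence of `E`:
    (hFP : ∀ d : D, P d → P (F.obj d))
    (hFE : (ObjectProperty.lift P (ObjectProperty.ι P ⋙ F)
      (fun X => hFP X.1 X.2)).IsEquivalence)
    -- `F` acts nilpotently on `E^⊥`:
    (hFperp : ∀ d : D, rOrth P d → rOrth P (F.obj d))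
    (hnilp : ∃ b : ℕ, ∀ d : D, rOrth P d → IsZero ((iter F b).obj d)) :
    ∃ hGP : ∀ d : D, P d → P (G.obj d),
      Nonempty ((ObjectProperty.lift P (ObjectProperty.ι P ⋙ F)
            (fun X => hFP X.1 X.2) ⋙
          ObjectProperty.lift P (ObjectProperty.ι P ⋙ G)
            (fun X => hGP X.1 X.2)) ≅ 𝟭 _) ∧
      Nonempty ((ObjectProperty.lift P (ObjectProperty.ι P ⋙ G)
            (fun X => hGP X.1 X.2) ⋙
          ObjectProperty.lift P (ObjectProperty.ι P ⋙ F)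
            (fun X => hFP X.1 X.2)) ≅ 𝟭 _) :=
  adjoint_restricts_to_quasi_inverse_general P hP_shift hP_retract _hadm_right F G adj hFP hFE
    hFperp

end Stmt4
end

section
/- Let D be a triangulated category with a semiorthogonal decomposition D = E ⊥ F (E right admissible with E^⊥ = F), and let τ : D → E be the right adjoint of the inclusion. Then for all d, d' ∈ D there is a natural isomorphism Hom_D(τ(d), d') ≅ Hom_{D/F}(q(d), q(d')), where q : D → D/F is the Verdier quotient functor. -/
/-!
Let `D` be a triangulated category with a semiorthogonal decomposition `D = E ⊥ F`
(`E` right admissible with `E^⊥ = F`), and let `τ : D → E` be the right adjoint of the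
inclusion.  Then for all `d, d'` there is an isomorphism, natural in both variables,
`Hom_D(τ d, d') ≅ Hom_{D/F}(q d, q d')`, where `q : D → D/F` is the Verdier quotient
functor (realized as the localization of `D` at the class `W` of morphisms whose cone
lies in `F = E^⊥`).
-/

open CategoryTheory Limits CategoryTheory.Pretriangulated

namespace Stmt9

universe v u u₂

variable {D : Type u} [Category.{v} D] [Preadditive D] [HasZeroObject D]
  [HasShift D ℤ] [∀ n : ℤ, (CategoryTheory.shiftFunctor D n).Additive] [Pretriangulated D]

/-- The right orthogonal of a class of objects. -/
def rOrth (P : D → Prop) : D → Prop := fun d => ∀ e : D, P e → ∀ f : e ⟶ d, f = 0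

/-- The class of morphisms whose cone lies in the right orthogonal of `P`. -/
def coneInOrth (P : D → Prop) : MorphismProperty D := fun X Y f =>
  ∃ (Z : D) (g : Y ⟶ Z) (h : Z ⟶ X⟦(1 : ℤ)⟧),
    (Triangle.mk f g h ∈ distTriang D) ∧ rOrth P Z

/-!
Write `W = coneInOrth P`. As `E` is closed under shifts, a morphism lies in `W` exactly when
composing with it is bijective on `Hom(e, -)` for every `e ∈ E`, i.e. when it is `E`-colocal:
one direction is the long exact `Hom(e, -)`-sequence, the other uses the sequence for `e⟦-1⟧`
to kill maps from `e` into the cone. The coreflector `τ` of a coreflective subcategory is a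
localization at the colocal morphisms, so `τ` and `q` are localizations at the same class `W`,
whence `Hom_{D/F}(q d, q d') ≃ Hom_E(τ d, τ d') ≃ Hom_D(τ d, d')`, naturally in `d, d'`.
-/

lemma rOrth_eq_rightOrthogonal {C : Type*} [Category C] [Preadditive C] (P : ObjectProperty C) :
    rOrth P = P.rightOrthogonal := by
  ext Z
  exact ⟨fun h _ f hX => h _ hX f, fun h _ hX f => h f hX⟩

lemma coneInOrth_eq_trW_rightOrthogonal (P : ObjectProperty D) :
    coneInOrth P = P.rightOrthogonal.trW := by
  ext X Y f
  simp only [coneInOrth, rOrth_eq_rightOrthogonal, ObjectProperty.trW_iff, exists_prop]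

section

variable {C : Type*} [Category C] [HasShift C ℤ] (P : ObjectProperty C) [P.IsStableUnderShift ℤ]

lemma isColocal_shift {X Y : C} {f : X ⟶ Y} (hf : P.isColocal f) (n : ℤ) :
    P.isColocal (f⟦n⟧') := by
  intro A hA
  let e (Z : C) : (A⟦-n⟧ ⟶ Z) ≃ (A ⟶ Z⟦n⟧) := (shiftEquiv C n).symm.toAdjunction.homEquiv A Z
  have he (v : A⟦-n⟧ ⟶ X) : e Y (v ≫ f) = e X v ≫ f⟦n⟧' :=
    (shiftEquiv C n).symm.toAdjunction.homEquiv_naturality_right v f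
  have hf' := hf _ (P.le_shift (-n) _ hA)
  refine ⟨fun u₁ u₂ hu => ?_, fun u => ?_⟩
  · obtain ⟨v₁, rfl⟩ := (e X).surjective u₁
    obtain ⟨v₂, rfl⟩ := (e X).surjective u₂
    simp only [← he] at hu
    rw [hf'.1 ((e Y).injective hu)]
  · obtain ⟨v, hv⟩ := hf'.2 ((e Y).symm u)
    exact ⟨e X v, by simp only [← he, hv, Equiv.apply_symm_apply]⟩

end

section

variable {C : Type*} [Category C] [Preadditive C] [HasZeroObject C] [HasShift C ℤ]
  [∀ n : ℤ, (shiftFunctor C n).Additive] [Pretriangulated C]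
  (P : ObjectProperty C) [P.IsStableUnderShift ℤ]

lemma trW_rightOrthogonal_le_isColocal : P.rightOrthogonal.trW ≤ P.isColocal := by
  rw [ObjectProperty.le_isColocal_iff, ObjectProperty.isColocal_trW]
  exact fun _ hX _ f hY => hY f hX

lemma isColocal_le_trW_rightOrthogonal : P.isColocal ≤ P.rightOrthogonal.trW := by
  intro X Y f hf
  obtain ⟨Z, g, h, hT⟩ := distinguished_cocone_triangle f
  refine ⟨Z, g, h, hT, fun A u hA => ?_⟩
  have hu : u ≫ h = 0 := (isColocal_shift P hf 1 A hA).1 (by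
    have : h ≫ f⟦1⟧' = 0 := comp_distTriang_mor_zero₃₁ _ hT
    dsimp only
    rw [Category.assoc, this, comp_zero, zero_comp])
  obtain ⟨v, rfl⟩ := Triangle.coyoneda_exact₃ _ hT u hu
  obtain ⟨w, rfl⟩ := (hf A hA).2 v
  have : f ≫ g = 0 := comp_distTriang_mor_zero₁₂ _ hT
  show (w ≫ f) ≫ g = 0
  rw [Category.assoc, this, comp_zero]

lemma trW_rightOrthogonal_eq_isColocal : P.rightOrthogonal.trW = P.isColocal :=
  le_antisymm (trW_rightOrthogonal_le_isColocal P) (isColocal_le_trW_rightOrthogonal P)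

end

lemma mem_range_ι_obj_iff {C : Type*} [Category C] (P : ObjectProperty C) (X : C) :
    X ∈ Set.range P.ι.obj ↔ P X :=
  ⟨fun ⟨Y, hY⟩ => hY ▸ Y.property, fun hX => ⟨⟨X, hX⟩, rfl⟩⟩

lemma isLocalization_coneInOrth (P : ObjectProperty D) [P.IsStableUnderShift ℤ]
    {τ : D ⥤ P.FullSubcategory} (adj : P.ι ⊣ τ) : τ.IsLocalization (coneInOrth P) := by
  have := ObjectProperty.isLocalization_isColocal adj
  simp only [mem_range_ι_obj_iff] at this
  rwa [coneInOrth_eq_trW_rightOrthogonal, trW_rightOrthogonal_eq_isColocal]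

noncomputable def homIsoHomOfIsLocalization {C E L : Type*} [Category.{v} C] [Category E]
    [Category.{v} L] (W : MorphismProperty C) {F : E ⥤ C} {G : C ⥤ E} (adj : F ⊣ G)
    [G.IsLocalization W] (Q : C ⥤ L) [Q.IsLocalization W] :
    ((G ⋙ F).op.prod (𝟭 C)) ⋙ Functor.hom C ≅ (Q.op.prod Q) ⋙ Functor.hom L :=
  NatIso.ofComponents
    (fun X => ((adj.homEquiv (G.obj X.1.unop) X.2).trans (Localization.homEquiv W G Q)).toIso)
    (by
      rintro ⟨X₁, Y₁⟩ ⟨X₂, Y₂⟩ ⟨a, b⟩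
      ext (u : F.obj (G.obj X₁.unop) ⟶ Y₁)
      show Localization.homEquiv W G Q (adj.homEquiv _ Y₂ (F.map (G.map a.unop) ≫ u ≫ b)) =
        Q.map a.unop ≫ Localization.homEquiv W G Q (adj.homEquiv _ Y₁ u) ≫ Q.map b
      rw [adj.homEquiv_naturality_left, adj.homEquiv_naturality_right,
        Localization.homEquiv_comp, Localization.homEquiv_comp, Localization.homEquiv_map,
        Localization.homEquiv_map])

theorem hom_from_right_adjoint_iso_hom_in_quotient_general
    (P : D → Prop)
    -- `E` is a thick subcategory:
    (hP_shift : ∀ (X : D) (n : ℤ), P X → P (X⟦n⟧))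
    -- `E` is right admissible, with right adjoint `τ` of the inclusion:
    (τ : D ⥤ ObjectProperty.FullSubcategory P)
    (adj : ObjectProperty.ι P ⊣ τ)
    -- the Verdier quotient `D/F`, `F = E^⊥`, as a localization of `D` at `coneInOrth P`:
    (Dq : Type u₂) [Category.{v} Dq] (q : D ⥤ Dq)
    [q.IsLocalization (coneInOrth P)] :
    Nonempty
      ((((τ ⋙ ObjectProperty.ι P).op.prod (𝟭 D)) ⋙ Functor.hom D) ≅
        ((q.op.prod q) ⋙ Functor.hom Dq)) := by
  have : ObjectProperty.IsStableUnderShift P ℤ := ⟨fun n => ⟨fun X hX => hP_shift X n hX⟩⟩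
  have := isLocalization_coneInOrth P adj
  exact ⟨homIsoHomOfIsLocalization (coneInOrth P) adj q⟩

theorem hom_from_right_adjoint_iso_hom_in_quotient
    (P : D → Prop)
    -- `E` is a thick subcategory:
    (hP_iso : ∀ {X Y : D}, (X ≅ Y) → P X → P Y)
    (hP_shift : ∀ (X : D) (n : ℤ), P X → P (X⟦n⟧))
    (hP_tri : ∀ T ∈ distTriang D, P T.obj₁ → P T.obj₂ → P T.obj₃)
    (hP_retract : ∀ (X Z : D), P Z → ∀ (i : X ⟶ Z) (r : Z ⟶ X), i ≫ r = 𝟙 X → P X)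
    -- `E` is right admissible, with right adjoint `τ` of the inclusion:
    (τ : D ⥤ ObjectProperty.FullSubcategory P)
    (adj : ObjectProperty.ι P ⊣ τ)
    -- the Verdier quotient `D/F`, `F = E^⊥`, as a localization of `D` at `coneInOrth P`:
    (Dq : Type u₂) [Category.{v} Dq] (q : D ⥤ Dq)
    [q.IsLocalization (coneInOrth P)] :
    Nonempty
      ((((τ ⋙ ObjectProperty.ι P).op.prod (𝟭 D)) ⋙ Functor.hom D) ≅
        ((q.op.prod q) ⋙ Functor.hom Dq)) :=
  hom_from_right_adjoint_iso_hom_in_quotient_general P hP_shift τ adj Dq q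

end Stmt9
end
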